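/- Let ℓ be a Kupisch series of type A_n and λ ∈ os_ℓ^{d+1} with λ₁ > λ_{d+1} + 1 − ℓ_{λ_{d+1}} (i.e., the corresponding module is non-projective). Setting x := λ_{d+1} + 1 − ℓ_{λ_{d+1}}, the tuple (x, λ₁−1, …, λ_d−1) is again in os_ℓ^{d+1}; that is, the set os_ℓ^{d+1} is closed under the 'd-th syzygy' operation λ ↦ (x, λ₁−1, …, λ_d−1). -/

import Mathlib

/-- A Kupisch series of type `A_n`: `ℓ₀ = 1` and `2 ≤ ℓ_i ≤ ℓ_{i-1} + 1` for `i ≥ 1`. -/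
def IsKupischA (n : ℕ) (l : Fin n → ℕ) : Prop :=
  (∀ h : 0 < n, l ⟨0, h⟩ = 1) ∧
  ∀ (i : ℕ) (h : i + 1 < n), 2 ≤ l ⟨i + 1, h⟩ ∧ l ⟨i + 1, h⟩ ≤ l ⟨i, Nat.lt_of_succ_lt h⟩ + 1

/-! The syzygy condition reduces to `ℓ_{λ_{d+1}} ≤ ℓ_{λ_d - 1} + (λ_{d+1} - λ_d + 1)`, which holds
because a Kupisch series grows by at most one per step: `i ↦ ℓ_i - i` is antitone. -/

theorem IsKupischA.antitone_sub {n : ℕ} {l : Fin n → ℕ} (hl : IsKupischA n l) :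
    Antitone fun i : Fin n => (l i : ℤ) - i := by
  cases n with
  | zero => exact fun i => i.elim0
  | succ m =>
    refine Fin.antitone_iff_succ_le.2 fun i => ?_
    have hstep : l i.succ ≤ l i.castSucc + 1 := (hl.2 i.val (by omega)).2
    simp only [Fin.val_succ, Fin.val_castSucc, Nat.cast_add, Nat.cast_one]
    omega

theorem IsKupischA.le_add_sub {n : ℕ} {l : Fin n → ℕ} (hl : IsKupischA n l) {i j : Fin n}
    (hij : i ≤ j) : l j ≤ l i + (j - i : ℕ) := by
  have hanti : (l j : ℤ) - j ≤ l i - i := hl.antitone_sub hij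
  have hij' : (i : ℕ) ≤ j := hij
  omega

/-- For `λ ∈ os_ℓ^{d+1}` non-projective (i.e. `λ₁ > x := λ_{d+1} + 1 − ℓ_{λ_{d+1}}`),
the `d`-th syzygy tuple `(x, λ₁−1, …, λ_d−1)` again lies in `os_ℓ^{d+1}`: one has
`0 ≤ x ≤ λ₁ − 1` and `(λ_d − 1) − x + 1 ≤ ℓ_{λ_d − 1}`. -/
theorem syzygy_mem_os {n d : ℕ}
    (l : Fin n → ℕ) (hl : IsKupischA n l)
    (lam : Fin (d + 1) → Fin n) (hmono : Monotone lam)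
    (x : ℕ)
    (hx : (x : ℤ) = ((lam (Fin.last d)).val : ℤ) + 1 - (l (lam (Fin.last d)) : ℤ))
    (hproj : x + 1 ≤ (lam 0).val) :
    x ≤ (lam 0).val - 1 ∧
    1 ≤ (lam ⟨d - 1, by omega⟩).val ∧
    (lam ⟨d - 1, by omega⟩).val - 1 - x + 1 ≤
      l ⟨(lam ⟨d - 1, by omega⟩).val - 1,
        lt_of_le_of_lt (Nat.sub_le _ _) (lam ⟨d - 1, by omega⟩).isLt⟩ := by
  set a := lam ⟨d - 1, by omega⟩
  set b := lam (Fin.last d)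
  have h0a : lam 0 ≤ a := hmono (Fin.zero_le _)
  have hab : a ≤ b := hmono (Fin.le_last _)
  have ha1 : 1 ≤ a.val := le_trans (by omega) (Fin.le_iff_val_le_val.1 h0a)
  refine ⟨by omega, ha1, ?_⟩
  have hgrowth := hl.le_add_sub (i := ⟨a.val - 1, by omega⟩) (j := b)
    (Fin.le_iff_val_le_val.2 (by simp only; omega))
  simp only at hgrowth
  omega
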